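/- M_P² = [[3,4],[-4,3]] is 5 times a rotation matrix, and the angle of the rotation M_P/√5 is -φ where φ = arctan(1/2); consequently applying the pinwheel inflation n times rotates directions by -nφ, and these rotations are pairwise distinct for distinct n. -/

import Mathlib

/-- The pinwheel expansion matrix. -/
noncomputable def Mp : Matrix (Fin 2) (Fin 2) ℝ := !![2, 1; -1, 2]

/-- The rotation matrix by angle `θ`. -/
noncomputable def rotMat (θ : ℝ) : Matrix (Fin 2) (Fin 2) ℝ :=
  !![Real.cos θ, -Real.sin θ; Real.sin θ, Real.cos θ]

/-!
`M_P = √5 • Rot(-φ)` with `φ = arctan (1/2)` is the polar form of the Gaussian integer `2 - i`. The powers `Rot(-φ)ⁿ = Rot(-nφ)` are pairwise distinct because `φ / π` is irrational: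
`cos 2φ = 3/5` is rational, and by Niven's theorem the only rational cosines of rational
multiples of `π` are `0, ±1/2, ±1`.
-/

open Real

theorem rotMat_zero : rotMat 0 = 1 := by
  simp [rotMat, Matrix.one_fin_two]

theorem rotMat_mul (a b : ℝ) : rotMat a * rotMat b = rotMat (a + b) := by
  rw [rotMat, rotMat, rotMat, Matrix.mul_fin_two, cos_add, sin_add]
  congr 1
  ring_nf

theorem rotMat_pow (θ : ℝ) (n : ℕ) : rotMat θ ^ n = rotMat (n * θ) := by
  induction n with
  | zero => simp [rotMat_zero]
  | succ n ih => rw [pow_succ, ih, rotMat_mul]; push_cast; ring_nf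

theorem injective_rotMat_pow_of_irrational {θ : ℝ} (hθ : Irrational (θ / π)) :
    Function.Injective (fun n : ℕ => rotMat θ ^ n) := by
  intro n m hnm
  simp only [rotMat_pow] at hnm
  have hrot : rotMat ((n - m) * θ) = 1 := calc
    _ = rotMat (n * θ) * rotMat (-(m * θ)) := by rw [rotMat_mul]; ring_nf
    _ = 1 := by rw [hnm, rotMat_mul, add_neg_cancel, rotMat_zero]
  have hcos : cos ((n - m) * θ) = 1 := by
    simpa [rotMat] using congrFun (congrFun hrot 0) 0
  obtain ⟨k, hk⟩ := cos_eq_one_iff _ |>.mp hcos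
  by_contra hne
  have hnm' : (n : ℝ) - m ≠ 0 := sub_ne_zero.mpr (by exact_mod_cast hne)
  refine hθ ⟨2 * k / ((n : ℚ) - m), ?_⟩
  push_cast
  field_simp
  linear_combination hk

theorem cos_two_mul_arctan_half : cos (2 * arctan (1 / 2)) = 3 / 5 := by
  rw [cos_two_mul, cos_arctan, div_pow, sq_sqrt (by positivity)]
  norm_num

theorem irrational_arctan_half_div_pi : Irrational (arctan (1 / 2) / π) := by
  rintro ⟨q, hq⟩
  have hmem := niven (θ := 2 * arctan (1 / 2)) ⟨2 * q, by push_cast; rw [hq]; field_simp⟩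
    ⟨3 / 5, by rw [cos_two_mul_arctan_half]; norm_num⟩
  rw [cos_two_mul_arctan_half] at hmem
  norm_num at hmem

theorem smul_rotMat_neg_arctan {a : ℝ} (ha : 0 < a) (b : ℝ) :
    √(a ^ 2 + b ^ 2) • rotMat (-arctan (b / a)) = !![a, b; -b, a] := by
  have hsqrt : √(a ^ 2 + b ^ 2) = a * √(1 + (b / a) ^ 2) := by
    rw [← sqrt_sq ha.le, ← sqrt_mul (sq_nonneg a), sqrt_sq ha.le]
    congr 1; field_simp
  rw [rotMat, cos_neg, sin_neg, cos_arctan, sin_arctan, hsqrt, Matrix.smul_of]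
  simp only [Matrix.smul_cons, Matrix.smul_empty, smul_eq_mul, neg_neg]
  congr 1
  field_simp

theorem Mp_eq_sqrt_five_smul_rotMat : Mp = √5 • rotMat (-arctan (1 / 2)) := by
  rw [show (5 : ℝ) = 2 ^ 2 + 1 ^ 2 by norm_num, smul_rotMat_neg_arctan two_pos, Mp]

theorem Mp_sq : Mp ^ 2 = !![3, 4; -4, 3] := by
  rw [sq, Mp, Matrix.mul_fin_two]
  norm_num

theorem Mp_sq_eq_five_smul_rotMat : Mp ^ 2 = (5 : ℝ) • rotMat (-(2 * arctan (1 / 2))) := by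
  rw [Mp_eq_sqrt_five_smul_rotMat, smul_pow, sq_sqrt (by norm_num), rotMat_pow]
  push_cast; ring_nf

/-- `M_P = √5 · Rot(-φ)` with `φ = arctan(1/2)`, so
`M_P² = [[3,4],[-4,3]] = 5 · Rot(-2φ)` is 5 times a rotation matrix; applying
the inflation `n` times rotates directions by `-nφ`, and these rotations are
pairwise distinct for distinct `n`. -/
theorem pinwheel_matrix_rotation :
    Mp = Real.sqrt 5 • rotMat (-(Real.arctan (1 / 2))) ∧
    Mp ^ 2 = !![3, 4; -4, 3] ∧
    Mp ^ 2 = (5 : ℝ) • rotMat (-(2 * Real.arctan (1 / 2))) ∧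
    Function.Injective (fun n : ℕ => rotMat (-(Real.arctan (1 / 2))) ^ n) := by
  refine ⟨Mp_eq_sqrt_five_smul_rotMat, Mp_sq, Mp_sq_eq_five_smul_rotMat, ?_⟩
  apply injective_rotMat_pow_of_irrational
  rw [neg_div]
  exact irrational_arctan_half_div_pi.neg
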